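/- arXiv:1708.05254 — 3 statements merged into one kernel-verified Lean document; each statement's English description precedes it below -/
import Mathlib

section
/- Let ‖·‖ be a norm on ℝ^d with closed balls B(x,r), let K : ℝ^d → [0,∞) be a symmetric kernel with tail function κ₁ with respect to ‖·‖, and let P be a λ^d-absolutely continuous probability measure on ℝ^d that is normal at some level ρ ≥ 0. If x ∈ ℝ^d and σ > 0 satisfy B(x, σ) ⊆ M_ρ, then for every δ > 0 we have h_{P,δ}(x) ≥ ρ − ρ·κ₁(σ/δ). -/
open MeasureTheory ENNReal

noncomputable section

/-- `N` is a norm on `ℝ^d`. -/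
structure IsNormOn (d : ℕ) (N : (Fin d → ℝ) → ℝ) : Prop where
  eq_zero_iff : ∀ x, N x = 0 ↔ x = 0
  smul : ∀ (a : ℝ) (x : Fin d → ℝ), N (a • x) = |a| * N x
  triangle : ∀ x y, N (x + y) ≤ N x + N y

/-- A symmetric kernel on `ℝ^d`: a bounded measurable function `K : ℝ^d → [0,∞)` that is
strictly positive in a neighborhood of `0`, even, and integrates to `1` with respect to
Lebesgue measure. -/
structure IsSymmKernel (d : ℕ) (K : (Fin d → ℝ) → ℝ) : Prop where
  measurable : Measurable K
  nonneg : ∀ x, 0 ≤ K x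
  bddAbove : BddAbove (Set.range K)
  pos_near_zero : ∀ᶠ x in nhds (0 : Fin d → ℝ), 0 < K x
  symm : ∀ x, K (-x) = K x
  integral_one : ∫ x, K x = 1

/-- The tail function `κ₁(r) := ∫_{ℝ^d ∖ B(0,r)} K dλ^d` of a kernel `K`, with respect to
the norm `N`. -/
def kappaOne (d : ℕ) (N K : (Fin d → ℝ) → ℝ) (r : ℝ) : ℝ :=
  ∫ x in {x : Fin d → ℝ | r < N x}, K x

/-- The tail function `κ∞(r) := sup_{x ∈ ℝ^d ∖ B(0,r)} K x` of a kernel `K`, with respect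
to the norm `N`. -/
def kappaInf (d : ℕ) (N K : (Fin d → ℝ) → ℝ) (r : ℝ) : ℝ :=
  sSup (K '' {x : Fin d → ℝ | r < N x})

/-- The infinite-sample kernel density estimator
`h_{P,δ}(x) := δ^{−d} ∫ K((x−y)/δ) dP(y)`. -/
def kdeP (d : ℕ) (K : (Fin d → ℝ) → ℝ) (δ : ℝ) (P : Measure (Fin d → ℝ))
    (x : Fin d → ℝ) : ℝ :=
  (δ ^ d)⁻¹ * ∫ y, K (δ⁻¹ • (x - y)) ∂P

/-- `h` is a Lebesgue density of the measure `P` on `ℝ^d`. -/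
def IsDensityOf (d : ℕ) (P : Measure (Fin d → ℝ)) (h : (Fin d → ℝ) → ℝ) : Prop :=
  Measurable h ∧ (∀ x, 0 ≤ h x) ∧ P = volume.withDensity fun x => ENNReal.ofReal (h x)

/-- `M_ρ`: the support of the measure `A ↦ λ^d(A ∩ {h ≥ ρ})`, i.e. the set of points all
of whose open neighborhoods intersect `{h ≥ ρ}` in a set of positive Lebesgue measure. -/
def Mset (d : ℕ) (h : (Fin d → ℝ) → ℝ) (ρ : ℝ) : Set (Fin d → ℝ) :=
  {x | ∀ U : Set (Fin d → ℝ), IsOpen U → x ∈ U → 0 < volume (U ∩ {y | ρ ≤ h y})}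

/-- `P` (with density `h`) is normal at level `ρ`: there are densities `h₁, h₂` of `P` with
`λ^d(M_ρ ∖ {h₁ ≥ ρ}) = 0` and `λ^d({h₂ > ρ} ∖ int M_ρ) = 0`. -/
def NormalAtLevel (d : ℕ) (P : Measure (Fin d → ℝ)) (h : (Fin d → ℝ) → ℝ) (ρ : ℝ) : Prop :=
  ∃ h₁ h₂, IsDensityOf d P h₁ ∧ IsDensityOf d P h₂ ∧
    volume (Mset d h ρ \ {x | ρ ≤ h₁ x}) = 0 ∧
    volume ({x | ρ < h₂ x} \ interior (Mset d h ρ)) = 0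

/-! On the ball `B(x, σ) ⊆ M_ρ` normality gives a density `h₁ ≥ ρ` almost everywhere, so
`h_{P,δ}(x) = δ^{-d} ∫ h₁(y) K((x - y)/δ) dy` is at least `ρ δ^{-d}` times the integral of
`K((x - y)/δ)` over that ball.  Substituting `z = (x - y)/δ` turns the latter into the mass of
`K` on `B(0, σ/δ)`, which is `1 - κ₁(σ/δ)`. -/

namespace IsNormOn

variable {d : ℕ} {N : (Fin d → ℝ) → ℝ}

lemma map_neg (hN : IsNormOn d N) (z : Fin d → ℝ) : N (-z) = N z := by
  simpa using hN.smul (-1) z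

lemma map_sub_rev (hN : IsNormOn d N) (u v : Fin d → ℝ) : N (u - v) = N (v - u) := by
  rw [← neg_sub, hN.map_neg]

lemma inv_smul_le_div_iff (hN : IsNormOn d N) {δ : ℝ} (hδ : 0 < δ) (z : Fin d → ℝ)
    (r : ℝ) :
    N (δ⁻¹ • z) ≤ r / δ ↔ N z ≤ r := by
  rw [hN.smul, abs_of_pos (inv_pos.2 hδ), inv_mul_eq_div, div_le_div_iff_of_pos_right hδ]

lemma convex_setOf_le (hN : IsNormOn d N) (r : ℝ) : Convex ℝ {z | N z ≤ r} := by
  intro u hu v hv a b ha hb hab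
  calc N (a • u + b • v) ≤ N (a • u) + N (b • v) := hN.triangle _ _
    _ = a * N u + b * N v := by rw [hN.smul, hN.smul, abs_of_nonneg ha, abs_of_nonneg hb]
    _ ≤ a * r + b * r := by gcongr <;> assumption
    _ = r := by rw [← add_mul, hab, one_mul]

lemma nullMeasurableSet_setOf_le (hN : IsNormOn d N) (r : ℝ) :
    NullMeasurableSet {z | N z ≤ r} :=
  (hN.convex_setOf_le r).nullMeasurableSet volume

end IsNormOn

namespace IsSymmKernel

variable {d : ℕ} {K : (Fin d → ℝ) → ℝ}

lemma integrable (hK : IsSymmKernel d K) : Integrable K :=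
  Integrable.of_integral_ne_zero (by rw [hK.integral_one]; exact one_ne_zero)

lemma setIntegral_setOf_le {N : (Fin d → ℝ) → ℝ} (hK : IsSymmKernel d K) (hN : IsNormOn d N)
    (r : ℝ) : ∫ z in {z | N z ≤ r}, K z = 1 - kappaOne d N K r := by
  have hcompl : {z : Fin d → ℝ | N z ≤ r}ᶜ = {z | r < N z} := by ext; simp
  have := integral_add_compl₀ (hN.nullMeasurableSet_setOf_le r) hK.integrable
  rw [hcompl, hK.integral_one] at this
  rw [kappaOne]
  linarith

lemma integrable_mul_comp_inv_smul_sub (hK : IsSymmKernel d K) {μ : Measure (Fin d → ℝ)}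
    {f : (Fin d → ℝ) → ℝ} (hf : Integrable f μ) (δ : ℝ) (x : Fin d → ℝ) :
    Integrable (fun y => f y * K (δ⁻¹ • (x - y))) μ := by
  obtain ⟨M, hM⟩ := hK.bddAbove
  refine (hf.bdd_mul (c := M) ?_ (.of_forall fun y => ?_)).congr
    (.of_forall fun y => mul_comm _ _)
  · exact (hK.measurable.comp
      ((measurable_const.sub measurable_id).const_smul δ⁻¹)).aestronglyMeasurable
  · rw [Real.norm_of_nonneg (hK.nonneg _)]
    exact hM (Set.mem_range_self _)

end IsSymmKernel

namespace IsDensityOf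

variable {d : ℕ} {P : Measure (Fin d → ℝ)} {h : (Fin d → ℝ) → ℝ}

lemma integral_eq (hh : IsDensityOf d P h) (f : (Fin d → ℝ) → ℝ) :
    ∫ y, f y ∂P = ∫ y, h y * f y := by
  obtain ⟨hmeas, hnonneg, rfl⟩ := hh
  rw [show (fun y => ENNReal.ofReal (h y)) = fun y => ((h y).toNNReal : ℝ≥0∞) from rfl,
    integral_withDensity_eq_integral_smul hmeas.real_toNNReal]
  simp only [NNReal.smul_def, Real.coe_toNNReal _ (hnonneg _), smul_eq_mul]

lemma integrable [IsFiniteMeasure P] (hh : IsDensityOf d P h) : Integrable h := by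
  obtain ⟨hmeas, hnonneg, rfl⟩ := hh
  refine ⟨hmeas.aestronglyMeasurable, ?_⟩
  rw [hasFiniteIntegral_iff_ofReal (.of_forall hnonneg), ← setLIntegral_univ,
    ← withDensity_apply _ MeasurableSet.univ]
  exact measure_lt_top _ _

end IsDensityOf

lemma integral_comp_inv_smul_sub {E F : Type*} [NormedAddCommGroup E] [NormedSpace ℝ E]
    [MeasurableSpace E] [BorelSpace E] [FiniteDimensional ℝ E] (μ : Measure E)
    [μ.IsAddHaarMeasure] [μ.IsNegInvariant] [NormedAddCommGroup F] [NormedSpace ℝ F]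
    (f : E → F) (x : E) {δ : ℝ} (hδ : 0 ≤ δ) :
    ∫ y, f (δ⁻¹ • (x - y)) ∂μ = δ ^ Module.finrank ℝ E • ∫ z, f z ∂μ := by
  rw [integral_sub_left_eq_self (fun z => f (δ⁻¹ • z)) μ x,
    μ.integral_comp_inv_smul_of_nonneg f hδ]

lemma kdeP_ge_of_ae_le_density {d : ℕ} {N K : (Fin d → ℝ) → ℝ} (hN : IsNormOn d N)
    (hK : IsSymmKernel d K) {P : Measure (Fin d → ℝ)} [IsFiniteMeasure P]
    {h : (Fin d → ℝ) → ℝ} (hh : IsDensityOf d P h) {ρ σ δ : ℝ} {x : Fin d → ℝ}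
    (hδ : 0 < δ) (hρ : ∀ᵐ y, N (y - x) ≤ σ → ρ ≤ h y) :
    ρ - ρ * kappaOne d N K (σ / δ) ≤ kdeP d K δ P x := by
  set g := {z : Fin d → ℝ | N z ≤ σ / δ}.indicator K with hg_def
  have hlower : ∀ᵐ y, ρ * g (δ⁻¹ • (x - y)) ≤ h y * K (δ⁻¹ • (x - y)) := by
    filter_upwards [hρ] with y hy
    by_cases hmem : δ⁻¹ • (x - y) ∈ {z : Fin d → ℝ | N z ≤ σ / δ}
    · rw [hg_def, Set.indicator_of_mem hmem]
      have hyx : N (y - x) ≤ σ := by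
        rw [hN.map_sub_rev, ← hN.inv_smul_le_div_iff hδ]
        exact hmem
      exact mul_le_mul_of_nonneg_right (hy hyx) (hK.nonneg _)
    · rw [hg_def, Set.indicator_of_notMem hmem, mul_zero]
      exact mul_nonneg (hh.2.1 y) (hK.nonneg _)
  have hg : Integrable fun z => g (δ⁻¹ • z) :=
    (integrable_comp_smul_iff volume g (inv_ne_zero hδ.ne')).2
      (hK.integrable.indicator₀ (hN.nullMeasurableSet_setOf_le _))
  calc ρ - ρ * kappaOne d N K (σ / δ)
      = (δ ^ d)⁻¹ * (ρ * (δ ^ d * ∫ z, g z)) := by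
        rw [integral_indicator₀ (hN.nullMeasurableSet_setOf_le _),
          hK.setIntegral_setOf_le hN]
        field_simp
    _ = (δ ^ d)⁻¹ * ∫ y, ρ * g (δ⁻¹ • (x - y)) := by
        rw [integral_const_mul, integral_comp_inv_smul_sub volume g x hδ.le,
          Module.finrank_fin_fun, smul_eq_mul]
    _ ≤ (δ ^ d)⁻¹ * ∫ y, h y * K (δ⁻¹ • (x - y)) := by
        refine mul_le_mul_of_nonneg_left ?_ (by positivity)
        exact integral_mono_ae ((hg.comp_sub_left x).const_mul ρ)
          (hK.integrable_mul_comp_inv_smul_sub hh.integrable δ x) hlower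
    _ = kdeP d K δ P x := by rw [kdeP, hh.integral_eq]

theorem kdeP_lower_bound_of_ball_subset_general {d : ℕ}
    (N : (Fin d → ℝ) → ℝ) (hN : IsNormOn d N)
    (K : (Fin d → ℝ) → ℝ) (hK : IsSymmKernel d K)
    (P : Measure (Fin d → ℝ)) [IsProbabilityMeasure P]
    (h : (Fin d → ℝ) → ℝ)
    (ρ : ℝ) (hnormal : NormalAtLevel d P h ρ)
    (x : Fin d → ℝ) (σ : ℝ)
    (hball : {y : Fin d → ℝ | N (y - x) ≤ σ} ⊆ Mset d h ρ)
    (δ : ℝ) (hδ : 0 < δ) :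
    ρ - ρ * kappaOne d N K (σ / δ) ≤ kdeP d K δ P x := by
  obtain ⟨h₁, -, hh₁, -, hnull, -⟩ := hnormal
  refine kdeP_ge_of_ae_le_density hN hK hh₁ hδ ?_
  filter_upwards [measure_eq_zero_iff_ae_notMem.mp hnull] with y hy hyx
  by_contra hlt
  exact hy ⟨hball hyx, hlt⟩

/-- Let `‖·‖` be a norm on `ℝ^d` with closed balls `B(x,r)`, `K` a
symmetric kernel with tail function `κ₁`, and `P` a Lebesgue-absolutely continuous
probability measure on `ℝ^d` that is normal at level `ρ ≥ 0`.  If `B(x,σ) ⊆ M_ρ` for some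
`x ∈ ℝ^d`, `σ > 0`, then for every `δ > 0` we have `h_{P,δ}(x) ≥ ρ − ρ·κ₁(σ/δ)`. -/
theorem kdeP_lower_bound_of_ball_subset {d : ℕ} (hd : 0 < d)
    (N : (Fin d → ℝ) → ℝ) (hN : IsNormOn d N)
    (K : (Fin d → ℝ) → ℝ) (hK : IsSymmKernel d K)
    (P : Measure (Fin d → ℝ)) [IsProbabilityMeasure P]
    (h : (Fin d → ℝ) → ℝ) (hdens : IsDensityOf d P h)
    (ρ : ℝ) (hρ : 0 ≤ ρ) (hnormal : NormalAtLevel d P h ρ)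
    (x : Fin d → ℝ) (σ : ℝ) (hσ : 0 < σ)
    (hball : {y : Fin d → ℝ | N (y - x) ≤ σ} ⊆ Mset d h ρ)
    (δ : ℝ) (hδ : 0 < δ) :
    ρ - ρ * kappaOne d N K (σ / δ) ≤ kdeP d K δ P x :=
  kdeP_lower_bound_of_ball_subset_general N hN K hK P h ρ hnormal x σ hball δ hδ
end
end

section
/- Let ‖·‖ be either the Euclidean norm or the supremum norm on ℝ^d, let c > 0, and let K := c·1_{B_{‖·‖}}, where B_{‖·‖} is the closed unit ball of ‖·‖ (so K is a symmetric kernel up to the normalization constant). For δ > 0 and a subset X ⊆ ℝ^d let 𝒦_δ := { K_δ(x − ·) : x ∈ X }, where K_δ := δ^{−d} K(·/δ). Then there exist constants A > 0 and ν > 0, depending only on d and not on δ, c, or X, such that for every δ > 0, every probability measure Q on ℝ^d, and every ε ∈ (0, δ^{−d} c], the covering numbers satisfy N(𝒦_δ, L₂(Q), ε) ≤ (A δ^{−d} c / ε)^ν. -/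
/-!
A maximal `ε`-separated subfamily of the kernel class is an `ε`-net, so it suffices to bound the
size `m` of a family `M • 1_{B i}` (with `M = δ⁻ᵈ c`) whose members are pairwise more than `ε`
apart in `L₂(Q)`, i.e. `Q (B i ∆ B j) > θ := (ε / M)²`. Among `n ≈ 2 log m / θ` independent
`Q`-samples, with positive probability every pair `B i`, `B j` is told apart by some sample, so the
`B i` cut out `m` distinct subsets of these `n` points. Balls are halfspaces after the lift
`v ↦ (v, ‖v‖², 1)` (Euclidean norm), or intersections of `d` such sets (sup norm); by a linear
dependence argument halfspaces in `ℝᵏ` shatter no `k + 1` points, and Sauer–Shelah bounds the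
number of cut-out subsets by `(n + 1) ^ D`. Thus `m ≤ ((2 log m + 2) / θ) ^ D`, which forces
`m ≤ (4 D / θ) ^ (2 D)`.
-/

open MeasureTheory ENNReal

noncomputable section

/-- The `ε`-covering number of a class `G` of functions on `ℝ^d`, viewed as a subset of
`L₂(P)`: the least number of closed `L₂(P)`-balls of radius `ε` (with arbitrary function
centers) needed to cover `G`; `∞` if no finite cover exists. -/
def covNum (d : ℕ) (P : Measure (Fin d → ℝ)) (G : Set ((Fin d → ℝ) → ℝ)) (ε : ℝ) :
    ℝ≥0∞ :=
  sInf {m : ℝ≥0∞ | ∃ s : Finset ((Fin d → ℝ) → ℝ), (s.card : ℝ≥0∞) = m ∧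
    ∀ g ∈ G, ∃ f ∈ s,
      (∫⁻ x, ENNReal.ofReal ((g x - f x) ^ 2) ∂P) ≤ ENNReal.ofReal (ε ^ 2)}

open Finset

theorem sum_Iic_choose_le_pow (n K : ℕ) : ∑ k ∈ Iic K, n.choose k ≤ (n + 1) ^ K := by
  calc ∑ k ∈ Iic K, n.choose k ≤ ∑ k ∈ range (K + 1), n ^ k * 1 ^ (K - k) * K.choose k := by
        rw [Nat.range_succ_eq_Iic]
        gcongr with k hk
        simpa using (Nat.choose_le_pow n k).trans
          (Nat.le_mul_of_pos_right _ (Nat.choose_pos (mem_Iic.1 hk)))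
    _ = (n + 1) ^ K := (add_pow _ _ _).symm

section Traces

variable {α κ ι : Type*} [Fintype κ] [Fintype ι]

open Classical in
def traceFamily (𝒞 : Set (Set α)) (ω : κ → α) : Finset (Finset κ) :=
  {t | ∃ S ∈ 𝒞, ∀ k, k ∈ t ↔ ω k ∈ S}

theorem mem_traceFamily {𝒞 : Set (Set α)} {ω : κ → α} {t : Finset κ} :
    t ∈ traceFamily 𝒞 ω ↔ ∃ S ∈ 𝒞, ∀ k, k ∈ t ↔ ω k ∈ S := by
  simp [traceFamily]

theorem traceFamily_mono {𝒞 𝒟 : Set (Set α)} (h : 𝒞 ⊆ 𝒟) (ω : κ → α) :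
    traceFamily 𝒞 ω ⊆ traceFamily 𝒟 ω := fun t ht ↦ by
  obtain ⟨S, hS, hSt⟩ := mem_traceFamily.1 ht
  exact mem_traceFamily.2 ⟨S, h hS, hSt⟩

theorem card_le_card_traceFamily {𝒞 : Set (Set α)} {ω : κ → α} {B : ι → Set α}
    (hB : ∀ i, B i ∈ 𝒞) (hsep : ∀ i j, i ≠ j → ∃ k, ω k ∈ symmDiff (B i) (B j)) :
    Fintype.card ι ≤ (traceFamily 𝒞 ω).card := by
  classical
  refine card_le_card_of_injOn (fun i ↦ ({k | ω k ∈ B i} : Finset κ))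
    (fun i _ ↦ mem_traceFamily.2 ⟨B i, hB i, by simp⟩) (fun i _ j _ hij ↦ ?_)
  by_contra hne
  obtain ⟨k, hk⟩ := hsep i j hne
  have := Finset.ext_iff.1 hij k
  simp only [mem_filter, mem_univ, true_and] at this
  rcases Set.mem_symmDiff.1 hk with ⟨hi, hj⟩ | ⟨hj, hi⟩
  exacts [hj (this.1 hi), hi (this.2 hj)]

theorem card_traceFamily_iInter_le (𝒞 : ι → Set (Set α)) (ω : κ → α) :
    (traceFamily ((fun T : ι → Set α ↦ ⋂ i, T i) '' Set.univ.pi 𝒞) ω).card ≤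
      ∏ i, (traceFamily (𝒞 i) ω).card := by
  classical
  rw [← Fintype.card_piFinset]
  refine (card_le_card fun t ht ↦ ?_).trans
    (card_image_le (f := fun u : ι → Finset κ ↦ ({k | ∀ i, k ∈ u i} : Finset κ)))
  obtain ⟨_, ⟨T, hT, rfl⟩, hTt⟩ := mem_traceFamily.1 ht
  refine mem_image.2 ⟨fun i ↦ ({k | ω k ∈ T i} : Finset κ), Fintype.mem_piFinset.2 fun i ↦ ?_, ?_⟩
  · exact mem_traceFamily.2 ⟨T i, hT i (Set.mem_univ i), by simp⟩
  · ext k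
    simp [hTt]

def halfspaces (φ : α → ι → ℝ) : Set (Set α) :=
  Set.range fun w : ι → ℝ ↦ {a | ∑ i, w i * φ a i ≤ 0}

theorem not_forall_exists_halfspace_of_card_lt {σ : Type*} [Fintype σ] (z : σ → ι → ℝ)
    (hcard : Fintype.card ι < Fintype.card σ) :
    ¬ ∀ P : σ → Prop, ∃ w : ι → ℝ, ∀ k, P k ↔ ∑ i, w i * z k i ≤ 0 := by
  intro h
  have hdep : ¬ LinearIndependent ℝ z := fun hli ↦ by
    have := hli.fintype_card_le_finrank
    rw [Module.finrank_fintype_fun_eq_card] at this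
    omega
  obtain ⟨g, hg, k₀, hk₀⟩ := Fintype.not_linearIndependent_iff.1 hdep
  wlog hpos : 0 < g k₀ generalizing g
  · exact this (-g) (by simp [hg]) (neg_ne_zero.2 hk₀)
      (neg_pos.2 (lt_of_le_of_ne (not_lt.1 hpos) hk₀))
  -- `w` cuts out `{k | g k ≤ 0}`, so every term of `∑ k, g k * ⟪w, z k⟫ = 0` is nonnegative
  obtain ⟨w, hw⟩ := h (fun k ↦ g k ≤ 0)
  have hrel : ∀ i, ∑ k, g k * z k i = 0 := fun i ↦ by simpa using congrFun hg i
  have hzero : ∑ k, g k * ∑ i, w i * z k i = 0 := by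
    calc ∑ k, g k * ∑ i, w i * z k i = ∑ i, w i * ∑ k, g k * z k i := by
          simp only [mul_sum]
          rw [sum_comm]
          exact sum_congr rfl fun _ _ ↦ sum_congr rfl fun _ _ ↦ by ring
      _ = 0 := by simp [hrel]
  have hnonneg : ∀ k, 0 ≤ g k * ∑ i, w i * z k i := fun k ↦ by
    by_cases hk : g k ≤ 0
    · exact mul_nonneg_of_nonpos_of_nonpos hk ((hw k).1 hk)
    · exact (mul_pos (not_le.1 hk) (not_le.1 (mt (hw k).2 hk))).le
  have hpos₀ : 0 < g k₀ * ∑ i, w i * z k₀ i :=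
    mul_pos hpos (not_le.1 (mt (hw k₀).2 (not_le.2 hpos)))
  exact (sum_pos' (fun k _ ↦ hnonneg k) ⟨k₀, mem_univ _, hpos₀⟩).ne' hzero

theorem not_shatters_traceFamily_halfspaces [DecidableEq κ] (φ : α → ι → ℝ) (ω : κ → α)
    {s : Finset κ} (hs : Fintype.card ι < s.card) :
    ¬ (traceFamily (halfspaces φ) ω).Shatters s := by
  classical
  intro hsh
  refine not_forall_exists_halfspace_of_card_lt (fun k : s ↦ φ (ω k)) (by simpa using hs)
    fun P ↦ ?_
  obtain ⟨u, hu, hsu⟩ := hsh (filter_subset (fun k ↦ ∃ h : k ∈ s, P ⟨k, h⟩) s)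
  obtain ⟨_, ⟨w, rfl⟩, huw⟩ := mem_traceFamily.1 hu
  refine ⟨w, fun k ↦ ?_⟩
  have := Finset.ext_iff.1 hsu k
  simp [k.2, huw] at this
  exact this.symm

theorem card_traceFamily_halfspaces_le (φ : α → ι → ℝ) (ω : κ → α) :
    (traceFamily (halfspaces φ) ω).card ≤ (Fintype.card κ + 1) ^ Fintype.card ι := by
  classical
  set 𝒜 := traceFamily (halfspaces φ) ω
  have hvc : 𝒜.vcDim ≤ Fintype.card ι := Finset.sup_le fun s hs ↦
    not_lt.1 fun h ↦ not_shatters_traceFamily_halfspaces φ ω h (mem_shatterer.1 hs)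
  calc 𝒜.card ≤ 𝒜.shatterer.card := card_le_card_shatterer 𝒜
    _ ≤ ∑ k ∈ Iic 𝒜.vcDim, (Fintype.card κ).choose k := card_shatterer_le_sum_vcDim
    _ ≤ ∑ k ∈ Iic (Fintype.card ι), (Fintype.card κ).choose k :=
        sum_le_sum_of_subset (Iic_subset_Iic.2 hvc)
    _ ≤ _ := sum_Iic_choose_le_pow _ _

end Traces

/-- Pollard's *polynomial discrimination* of degree `D`. -/
def HasPolynomialDiscrimination {α : Type*} (𝒞 : Set (Set α)) (D : ℕ) : Prop :=
  ∀ n (ω : Fin n → α), (traceFamily 𝒞 ω).card ≤ (n + 1) ^ D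

namespace HasPolynomialDiscrimination

variable {α ι : Type*} [Fintype ι] {𝒞 𝒟 : Set (Set α)} {D D' : ℕ}

theorem mono (h : HasPolynomialDiscrimination 𝒟 D) (h𝒞 : 𝒞 ⊆ 𝒟) (hD : D ≤ D') :
    HasPolynomialDiscrimination 𝒞 D' := fun n ω ↦
  (card_le_card (traceFamily_mono h𝒞 ω)).trans
    ((h n ω).trans (Nat.pow_le_pow_right n.succ_pos hD))

theorem halfspaces (φ : α → ι → ℝ) :
    HasPolynomialDiscrimination (_root_.halfspaces φ) (Fintype.card ι) := fun n ω ↦ by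
  simpa using card_traceFamily_halfspaces_le φ ω

theorem iInter {𝒞 : ι → Set (Set α)} (h : ∀ i, HasPolynomialDiscrimination (𝒞 i) D) :
    HasPolynomialDiscrimination ((fun T : ι → Set α ↦ ⋂ i, T i) '' Set.univ.pi 𝒞)
      (Fintype.card ι * D) := fun n ω ↦ by
  calc _ ≤ ∏ i, (traceFamily (𝒞 i) ω).card := card_traceFamily_iInter_le 𝒞 ω
    _ ≤ ∏ _i : ι, (n + 1) ^ D := prod_le_prod' fun i _ ↦ h i n ω
    _ = (n + 1) ^ (Fintype.card ι * D) := by rw [prod_const, card_univ, ← pow_mul, mul_comm]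

end HasPolynomialDiscrimination

section Balls

variable {α ι : Type*} [Fintype ι]

/-- Under the lift `v ↦ (v, ∑ i, v i ^ 2, 1)` Euclidean balls become halfspaces. -/
def sqNormLift (v : ι → ℝ) : ι ⊕ Fin 2 → ℝ :=
  Sum.elim v ![∑ i, v i ^ 2, 1]

theorem setOf_sum_sq_sub_le_mem_halfspaces (f : α → ι → ℝ) (x : ι → ℝ) (r : ℝ) :
    {a | ∑ i, (x i - f a i) ^ 2 ≤ r} ∈ halfspaces (sqNormLift ∘ f) := by
  refine ⟨Sum.elim (fun i ↦ -2 * x i) ![1, ∑ i, x i ^ 2 - r], Set.ext fun a ↦ ?_⟩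
  have hexpand : ∑ i, (x i - f a i) ^ 2 =
      ∑ i, -2 * x i * f a i + ∑ i, f a i ^ 2 + ∑ i, x i ^ 2 := by
    rw [← sum_add_distrib, ← sum_add_distrib]
    exact sum_congr rfl fun _ _ ↦ by ring
  simp only [Set.mem_ofPred_eq, Function.comp_apply, sqNormLift, Fintype.sum_sum_type,
    Sum.elim_inl, Sum.elim_inr, Fin.sum_univ_two, Matrix.cons_val_zero, Matrix.cons_val_one,
    one_mul, mul_one, hexpand]
  constructor <;> intro h <;> linarith

theorem norm_inv_smul_sub_le_one_iff {δ : ℝ} (hδ : 0 < δ) (x y : ι → ℝ) :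
    ‖δ⁻¹ • (x - y)‖ ≤ 1 ↔ ∀ i, (x i - y i) ^ 2 ≤ δ ^ 2 := by
  rw [pi_norm_le_iff_of_nonneg zero_le_one]
  refine forall_congr' fun i ↦ ?_
  rw [Pi.smul_apply, norm_smul, norm_inv, Real.norm_of_nonneg hδ.le, inv_mul_le_iff₀ hδ,
    mul_one, Pi.sub_apply, Real.norm_eq_abs, sq_le_sq, abs_of_pos hδ]

theorem sqrt_sum_inv_smul_sub_sq_le_one_iff {δ : ℝ} (hδ : 0 < δ) (x y : ι → ℝ) :
    √(∑ i, ((δ⁻¹ • (x - y)) i) ^ 2) ≤ 1 ↔ ∑ i, (x i - y i) ^ 2 ≤ δ ^ 2 := by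
  simp only [Pi.smul_apply, Pi.sub_apply, smul_eq_mul, mul_pow, ← mul_sum, Real.sqrt_le_one,
    inv_pow, inv_mul_le_iff₀ (pow_pos hδ 2), mul_one]

theorem hasPolynomialDiscrimination_balls {d : ℕ} {N : (Fin d → ℝ) → ℝ}
    (hN : (∀ x, N x = ‖x‖) ∨ (∀ x, N x = √(∑ i, (x i) ^ 2))) {δ : ℝ} (hδ : 0 < δ) :
    HasPolynomialDiscrimination (Set.range fun x ↦ {y | N (δ⁻¹ • (x - y)) ≤ 1})
      (3 * d + 2) := by
  rcases hN with hN | hN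
  · refine (HasPolynomialDiscrimination.iInter fun c ↦ HasPolynomialDiscrimination.halfspaces
      (sqNormLift ∘ fun (y : Fin d → ℝ) (_ : Unit) ↦ y c)).mono ?_ (by simp; omega)
    rintro _ ⟨x, rfl⟩
    refine ⟨fun c ↦ {y | (x c - y c) ^ 2 ≤ δ ^ 2}, fun c _ ↦ ?_, ?_⟩
    · simpa using setOf_sum_sq_sub_le_mem_halfspaces (fun (y : Fin d → ℝ) (_ : Unit) ↦ y c)
        (fun _ ↦ x c) (δ ^ 2)
    · ext y
      simp [hN, norm_inv_smul_sub_le_one_iff hδ]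
  · refine (HasPolynomialDiscrimination.halfspaces (sqNormLift ∘ id)).mono ?_ (by simp; omega)
    rintro _ ⟨x, rfl⟩
    convert setOf_sum_sq_sub_le_mem_halfspaces id x (δ ^ 2) using 3 with y
    rw [hN]
    exact sqrt_sum_inv_smul_sub_sq_le_one_iff hδ x y

end Balls

theorem exists_separating_sample {α ι : Type*} [MeasurableSpace α] [Fintype ι] (Q : Measure α)
    [IsProbabilityMeasure Q] {B : ι → Set α} (hB : ∀ i, MeasurableSet (B i)) {t : ℝ≥0∞}
    (hsep : ∀ i j, i ≠ j → t < Q (symmDiff (B i) (B j))) {n : ℕ}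
    (hn : (Fintype.card ι : ℝ≥0∞) ^ 2 * (1 - t) ^ n < 1) :
    ∃ ω : Fin n → α, ∀ i j, i ≠ j → ∃ k, ω k ∈ symmDiff (B i) (B j) := by
  classical
  set Bad : ι × ι → Set (Fin n → α) := fun p ↦ Set.univ.pi fun _ ↦ (symmDiff (B p.1) (B p.2))ᶜ
  have hBad : ∀ p ∈ univ.offDiag, Measure.pi (fun _ ↦ Q) (Bad p) ≤ (1 - t) ^ n := by
    intro p hp
    rw [Measure.pi_pi, prod_const, card_univ, Fintype.card_fin,
      prob_compl_eq_one_sub ((hB _).symmDiff (hB _))]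
    gcongr
    exact (hsep _ _ (mem_offDiag.1 hp).2.2).le
  have hunion : Measure.pi (fun _ ↦ Q) (⋃ p ∈ univ.offDiag, Bad p) < 1 := calc
    _ ≤ ∑ p ∈ univ.offDiag, Measure.pi (fun _ ↦ Q) (Bad p) := measure_biUnion_finset_le _ _
    _ ≤ ∑ _p ∈ univ.offDiag, (1 - t) ^ n := sum_le_sum hBad
    _ ≤ (Fintype.card ι : ℝ≥0∞) ^ 2 * (1 - t) ^ n := by
      rw [sum_const, nsmul_eq_mul, sq, ← Nat.cast_mul, ← Fintype.card_prod]
      gcongr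
      exact_mod_cast card_le_univ _
    _ < 1 := hn
  obtain ⟨ω, hω⟩ : (⋃ p ∈ univ.offDiag, Bad p)ᶜ.Nonempty := by
    rw [Set.nonempty_compl]
    intro huniv
    rw [huniv, measure_univ] at hunion
    exact lt_irrefl _ hunion
  refine ⟨ω, fun i j hij ↦ ?_⟩
  have : ω ∉ Bad (i, j) := fun h ↦ hω (Set.mem_biUnion (by simpa using hij) h)
  simpa only [Bad, Set.mem_univ_pi, Set.mem_compl_iff, not_forall, not_not] using this

theorem exp_le_of_exp_le_pow {D : ℕ} {θ x : ℝ} (hθ : 0 < θ) (hx : 0 ≤ x)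
    (h : Real.exp x ≤ ((2 * x + 2) / θ) ^ D) : Real.exp x ≤ (4 * D / θ) ^ (2 * D) := by
  rcases D.eq_zero_or_pos with rfl | hD
  · simpa using h
  have hD₀ : (0 : ℝ) < D := by exact_mod_cast hD
  have hD₁ : (1 : ℝ) ≤ D := by exact_mod_cast hD
  -- `a := exp (x / 2D)` is both `≥ 1 + x / 2D` and, by `h`, `≤ √((2x + 2) / θ)`
  set a := Real.exp (x / (2 * D))
  have ha : a ^ (2 * D) = Real.exp x := by
    rw [← Real.exp_nat_mul]
    congr 1
    push_cast
    field_simp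
  have hsq : a ^ 2 ≤ (2 * x + 2) / θ := by
    rw [← pow_le_pow_iff_left₀ (by positivity) (by positivity) hD.ne', ← pow_mul, ha]
    exact h
  have hlow : (2 * x + 2) / (4 * D) ≤ a := calc
    (2 * x + 2) / (4 * D) = x / (2 * D) + 1 / (2 * D) := by field_simp; ring
    _ ≤ x / (2 * D) + 1 := by gcongr; rw [div_le_one (by positivity)]; linarith
    _ ≤ a := by linarith [Real.add_one_le_exp (x / (2 * D))]
  have hup : a ≤ 4 * D / θ := by
    have h₁ : a * ((2 * x + 2) / (4 * D)) ≤ (2 * x + 2) / θ :=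
      (mul_le_mul_of_nonneg_left hlow (Real.exp_pos _).le).trans (by rwa [← sq])
    rw [mul_div_assoc', div_le_div_iff₀ (by positivity) hθ] at h₁
    rw [le_div_iff₀ hθ]
    nlinarith
  calc Real.exp x = a ^ (2 * D) := ha.symm
    _ ≤ (4 * D / θ) ^ (2 * D) := pow_le_pow_left₀ (Real.exp_pos _).le hup _

theorem card_le_of_measure_symmDiff_gt {α ι : Type*} [MeasurableSpace α] [Fintype ι]
    {𝒞 : Set (Set α)} {D : ℕ} (h𝒞 : HasPolynomialDiscrimination 𝒞 D) (Q : Measure α)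
    [IsProbabilityMeasure Q] {B : ι → Set α} (hB𝒞 : ∀ i, B i ∈ 𝒞)
    (hB : ∀ i, MeasurableSet (B i)) {θ : ℝ} (hθ₀ : 0 < θ) (hθ₁ : θ ≤ 1)
    (hsep : ∀ i j, i ≠ j → ENNReal.ofReal θ < Q (symmDiff (B i) (B j))) :
    (Fintype.card ι : ℝ) ≤ (4 * D / θ) ^ (2 * D) := by
  set m := Fintype.card ι
  rcases Nat.eq_zero_or_pos m with hm | hm
  · rw [hm, Nat.cast_zero]
    positivity
  have hm₀ : (0 : ℝ) < m := by exact_mod_cast hm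
  set L := Real.log m
  have hL : 0 ≤ L := Real.log_nonneg (by exact_mod_cast hm)
  -- with `n > 2 L / θ` samples, `m² (1 - θ)ⁿ ≤ exp (2 L - n θ) < 1`
  set n := ⌊2 * L / θ⌋₊ + 1
  have hnθ : 2 * L < n * θ := by
    rw [← div_lt_iff₀ hθ₀]
    push_cast [n]
    exact Nat.lt_floor_add_one _
  have hn : ((n + 1 : ℕ) : ℝ) ≤ (2 * L + 2) / θ := by
    have hfloor := Nat.floor_le (div_nonneg (by positivity : 0 ≤ 2 * L) hθ₀.le)
    have h2θ : 2 ≤ 2 / θ := by rw [le_div_iff₀ hθ₀]; linarith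
    push_cast [n]
    rw [add_div]
    linarith
  have hsmall : (m : ℝ≥0∞) ^ 2 * (1 - ENNReal.ofReal θ) ^ n < 1 := by
    have hreal : (m : ℝ) ^ 2 * (1 - θ) ^ n < 1 := calc
      (m : ℝ) ^ 2 * (1 - θ) ^ n ≤ Real.exp L ^ 2 * Real.exp (-θ) ^ n := by
        rw [Real.exp_log hm₀]
        gcongr
        linarith [Real.add_one_le_exp (-θ)]
      _ = Real.exp (2 * L - n * θ) := by
        rw [← Real.exp_nat_mul, ← Real.exp_nat_mul, ← Real.exp_add]
        push_cast
        ring_nf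
      _ < 1 := Real.exp_lt_one_iff.2 (by linarith)
    rw [← ENNReal.ofReal_one, ← ENNReal.ofReal_sub _ hθ₀.le, ← ENNReal.ofReal_natCast,
      ← ENNReal.ofReal_pow hm₀.le, ← ENNReal.ofReal_pow (by linarith),
      ← ENNReal.ofReal_mul (by positivity)]
    exact (ENNReal.ofReal_lt_ofReal_iff one_pos).2 hreal
  obtain ⟨ω, hω⟩ := exists_separating_sample Q hB hsep hsmall
  have hm_le : Real.exp L ≤ ((2 * L + 2) / θ) ^ D := calc
    Real.exp L = m := Real.exp_log hm₀
    _ ≤ ((n + 1 : ℕ) : ℝ) ^ D := by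
      exact_mod_cast (card_le_card_traceFamily hB𝒞 hω).trans (h𝒞 n ω)
    _ ≤ ((2 * L + 2) / θ) ^ D := by gcongr
  rw [← Real.exp_log hm₀]
  exact exp_le_of_exp_le_pow hθ₀ hL hm_le

theorem exists_finset_forall_exists_not_of_pairwise_card_le {β : Type*} {G : Set β}
    {r : β → β → Prop} (hsymm : ∀ f g, r f g → r g f) (hirr : ∀ g, ¬ r g g) {B : ℕ}
    (hB : ∀ s : Finset β, ↑s ⊆ G → (s : Set β).Pairwise r → s.card ≤ B) :
    ∃ s : Finset β, s.card ≤ B ∧ ∀ g ∈ G, ∃ f ∈ s, ¬ r g f := by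
  classical
  -- a packing of maximal size is a net
  obtain ⟨s, ⟨hsG, hsr⟩, hmax⟩ :=
    (InvImage.wf (fun s : Finset β ↦ B - s.card) wellFounded_lt).has_min
      {s | ↑s ⊆ G ∧ (s : Set β).Pairwise r} ⟨∅, by simp⟩
  refine ⟨s, hB s hsG hsr, fun g hg ↦ ?_⟩
  by_contra! hfar
  have hgs : g ∉ s := fun h ↦ hirr g (hfar g h)
  have hins : ↑(insert g s) ⊆ G ∧ ((insert g s : Finset β) : Set β).Pairwise r := by
    rw [coe_insert, Set.insert_subset_iff, Set.pairwise_insert]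
    exact ⟨⟨hg, hsG⟩, hsr, fun f hf _ ↦ ⟨hfar f hf, hsymm g f (hfar f hf)⟩⟩
  have hcard := hB _ hins.1 hins.2
  have := hmax _ hins
  simp only [InvImage, card_insert_of_notMem hgs] at this hcard
  omega

theorem covNum_mono {d : ℕ} (P : Measure (Fin d → ℝ)) {G G' : Set ((Fin d → ℝ) → ℝ)}
    (h : G ⊆ G') (ε : ℝ) : covNum d P G ε ≤ covNum d P G' ε :=
  sInf_le_sInf fun _ ⟨s, hs, hcov⟩ ↦ ⟨s, hs, fun g hg ↦ hcov g (h hg)⟩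

theorem covNum_le_of_forall_pairwise_card_le {d : ℕ} (P : Measure (Fin d → ℝ))
    (G : Set ((Fin d → ℝ) → ℝ)) (ε : ℝ) {T : ℝ}
    (hT : ∀ s : Finset ((Fin d → ℝ) → ℝ), ↑s ⊆ G →
      (s : Set ((Fin d → ℝ) → ℝ)).Pairwise
        (fun f g ↦ ENNReal.ofReal (ε ^ 2) < ∫⁻ x, ENNReal.ofReal ((f x - g x) ^ 2) ∂P) →
      (s.card : ℝ) ≤ T) :
    covNum d P G ε ≤ ENNReal.ofReal T := by
  have hT₀ : 0 ≤ T := by simpa using hT ∅ (by simp) (by simp)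
  obtain ⟨s, hs, hcov⟩ := exists_finset_forall_exists_not_of_pairwise_card_le
    (fun f g h ↦ by simpa only [sub_sq_comm] using h) (fun f ↦ by simp) (B := ⌊T⌋₊)
    fun s hsG hsr ↦ Nat.le_floor (hT s hsG hsr)
  calc covNum d P G ε ≤ s.card := sInf_le ⟨s, rfl, fun g hg ↦ by simpa using hcov g hg⟩
    _ ≤ (⌊T⌋₊ : ℝ≥0∞) := by exact_mod_cast hs
    _ ≤ ENNReal.ofReal T := by
      rw [← ENNReal.ofReal_natCast]
      exact ENNReal.ofReal_le_ofReal (Nat.floor_le hT₀)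

theorem lintegral_sq_indicator_sub_indicator {α : Type*} [MeasurableSpace α] (μ : Measure α)
    {S T : Set α} (hS : MeasurableSet S) (hT : MeasurableSet T) (M : ℝ) :
    ∫⁻ a, ENNReal.ofReal ((S.indicator (fun _ ↦ M) a - T.indicator (fun _ ↦ M) a) ^ 2) ∂μ =
      ENNReal.ofReal (M ^ 2) * μ (symmDiff S T) := by
  rw [← lintegral_indicator_const (hS.symmDiff hT)]
  congr 1 with a
  by_cases ha : a ∈ S <;> by_cases hb : a ∈ T <;> simp [Set.indicator, ha, hb, Set.mem_symmDiff]

theorem covNum_indicator_le {d : ℕ} {𝒞 : Set (Set (Fin d → ℝ))} {D : ℕ}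
    (h𝒞 : HasPolynomialDiscrimination 𝒞 D) (hmeas : ∀ S ∈ 𝒞, MeasurableSet S)
    (Q : Measure (Fin d → ℝ)) [IsProbabilityMeasure Q] {M ε : ℝ} (hε : 0 < ε) (hεM : ε ≤ M) :
    covNum d Q {f | ∃ S ∈ 𝒞, f = S.indicator fun _ ↦ M} ε ≤
      ENNReal.ofReal ((4 * D * M / ε) ^ (4 * D)) := by
  have hM : 0 < M := hε.trans_le hεM
  set θ := (ε / M) ^ 2 with hθ
  have hθ₀ : 0 < θ := by positivity
  have hθ₁ : θ ≤ 1 := pow_le_one₀ (by positivity) ((div_le_one hM).2 hεM)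
  refine covNum_le_of_forall_pairwise_card_le Q _ ε fun s hsG hsep ↦ ?_
  choose S hS𝒞 hSf using fun f : s ↦ hsG f.2
  have hsepS : ∀ f g, f ≠ g → ENNReal.ofReal θ < Q (symmDiff (S f) (S g)) := by
    intro f g hfg
    have hfg' := hsep f.2 g.2 (Subtype.coe_injective.ne hfg)
    rw [hSf f, hSf g, lintegral_sq_indicator_sub_indicator Q (hmeas _ (hS𝒞 f))
      (hmeas _ (hS𝒞 g)), show ε ^ 2 = M ^ 2 * θ by rw [hθ]; field_simp,
      ENNReal.ofReal_mul (by positivity)] at hfg'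
    exact (ENNReal.mul_lt_mul_iff_right (by simp; positivity) ofReal_ne_top).1 hfg'
  have hpow : ((4 : ℝ) * D) ^ (2 * D) ≤ (4 * D) ^ (4 * D) := by
    rcases D.eq_zero_or_pos with hD | hD
    · simp [hD]
    · exact pow_le_pow_right₀ (by norm_cast; omega) (by omega)
  calc (s.card : ℝ) = Fintype.card s := by rw [Fintype.card_coe]
    _ ≤ (4 * D / θ) ^ (2 * D) :=
      card_le_of_measure_symmDiff_gt h𝒞 Q hS𝒞 (fun f ↦ hmeas _ (hS𝒞 f)) hθ₀ hθ₁ hsepS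
    _ = (4 * D) ^ (2 * D) * (M / ε) ^ (4 * D) := by
      rw [hθ, div_eq_mul_inv, ← inv_pow, inv_div, mul_pow, ← pow_mul,
        show 2 * (2 * D) = 4 * D by ring]
    _ ≤ (4 * D) ^ (4 * D) * (M / ε) ^ (4 * D) := by gcongr
    _ = (4 * D * M / ε) ^ (4 * D) := by rw [← mul_pow, mul_div_assoc]

theorem covNum_ball_indicator_kernel_general {d : ℕ}
    (N : (Fin d → ℝ) → ℝ)
    (hN : (∀ x, N x = ‖x‖) ∨ (∀ x, N x = Real.sqrt (∑ i, (x i) ^ 2))) :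
    ∃ A ν : ℝ, 0 < A ∧ 0 < ν ∧
      ∀ (c : ℝ), 0 < c → ∀ (X : Set (Fin d → ℝ)) (δ : ℝ), 0 < δ →
        ∀ (Q : Measure (Fin d → ℝ)), IsProbabilityMeasure Q →
          ∀ ε : ℝ, 0 < ε → ε ≤ (δ ^ d)⁻¹ * c →
            covNum d Q
                {f | ∃ x ∈ X,
                  f = fun y => (δ ^ d)⁻¹ * (if N (δ⁻¹ • (x - y)) ≤ 1 then c else 0)} ε ≤
              ENNReal.ofReal ((A * ((δ ^ d)⁻¹ * c) / ε) ^ ν) := by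
  set D := 3 * d + 2
  refine ⟨4 * D, (4 * D : ℕ), by positivity, by positivity, fun c _ X δ hδ Q _ ε hε hεM ↦ ?_⟩
  set M := (δ ^ d)⁻¹ * c
  set ball : (Fin d → ℝ) → Set (Fin d → ℝ) := fun x ↦ {y | N (δ⁻¹ • (x - y)) ≤ 1}
  have hsub :
      {f | ∃ x ∈ X, f = fun y ↦ (δ ^ d)⁻¹ * (if N (δ⁻¹ • (x - y)) ≤ 1 then c else 0)} ⊆
        {f | ∃ S ∈ Set.range ball, f = S.indicator fun _ ↦ M} := by
    rintro _ ⟨x, -, rfl⟩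
    refine ⟨ball x, ⟨x, rfl⟩, funext fun y ↦ ?_⟩
    by_cases h : N (δ⁻¹ • (x - y)) ≤ 1 <;> simp [ball, M, h]
  have hmeas : ∀ S ∈ Set.range ball, MeasurableSet S := by
    have hNcont : Continuous N := by rcases hN with h | h <;> rw [funext h] <;> fun_prop
    rintro _ ⟨x, rfl⟩
    exact measurableSet_le (by fun_prop) measurable_const
  calc covNum d Q _ ε ≤ covNum d Q {f | ∃ S ∈ Set.range ball, f = S.indicator fun _ ↦ M} ε :=
        covNum_mono Q hsub ε
    _ ≤ ENNReal.ofReal ((4 * D * M / ε) ^ (4 * D)) :=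
        covNum_indicator_le (hasPolynomialDiscrimination_balls hN hδ) hmeas Q hε hεM
    _ = ENNReal.ofReal ((4 * D * M / ε) ^ ((4 * D : ℕ) : ℝ)) := by
        rw [Real.rpow_natCast]

/-- Let `‖·‖` be either the supremum norm (the default norm of
`Fin d → ℝ`) or the Euclidean norm on `ℝ^d`, `c > 0`, and `K := c·1_{B_{‖·‖}}` the
multiple of the indicator of the closed unit ball.  For `δ > 0` and `X ⊆ ℝ^d` let
`𝒦_δ := { K_δ(x − ·) : x ∈ X }` with `K_δ := δ^{−d} K(·/δ)`.  Then there are constants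
`A, ν > 0` depending only on `d` (not on `δ`, `c`, or `X`) such that for every `δ > 0`,
every probability measure `Q` on `ℝ^d`, and every `ε ∈ (0, δ^{−d} c]`,
`N(𝒦_δ, L₂(Q), ε) ≤ (A δ^{−d} c / ε)^ν`. -/
theorem covNum_ball_indicator_kernel {d : ℕ} (hd : 0 < d)
    (N : (Fin d → ℝ) → ℝ)
    (hN : (∀ x, N x = ‖x‖) ∨ (∀ x, N x = Real.sqrt (∑ i, (x i) ^ 2))) :
    ∃ A ν : ℝ, 0 < A ∧ 0 < ν ∧
      ∀ (c : ℝ), 0 < c → ∀ (X : Set (Fin d → ℝ)) (δ : ℝ), 0 < δ →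
        ∀ (Q : Measure (Fin d → ℝ)), IsProbabilityMeasure Q →
          ∀ ε : ℝ, 0 < ε → ε ≤ (δ ^ d)⁻¹ * c →
            covNum d Q
                {f | ∃ x ∈ X,
                  f = fun y => (δ ^ d)⁻¹ * (if N (δ⁻¹ • (x - y)) ≤ 1 then c else 0)} ε ≤
              ENNReal.ofReal ((A * ((δ ^ d)⁻¹ * c) / ε) ^ ν) :=
  covNum_ball_indicator_kernel_general N hN
end
end

section
/- Let P be a λ^d-absolutely continuous probability measure on ℝ^d, ρ ≥ 0, and let h be any λ^d-density of P. Then: (i) λ^d({h ≥ ρ} ∖ M_ρ) = 0; and (ii) if P is normal at level ρ, then also λ^d(M_ρ ∖ {h ≥ ρ}) = 0, and consequently λ^d(M_ρ △ {h ≥ ρ}) = 0, where △ denotes the symmetric difference. -/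
/-! `M_ρ` is the support of Lebesgue measure restricted to `{h ≥ ρ}`, and in a second-countable
space a measure is carried by its support, which gives (i). Two densities of `P` agree almost
everywhere, so `{h ≥ ρ}` and `{h₁ ≥ ρ}` differ by a null set and normality gives (ii). -/

open MeasureTheory ENNReal

noncomputable section

namespace MeasureTheory.Measure

variable {X : Type*} [TopologicalSpace X] [MeasurableSpace X] [OpensMeasurableSpace X]
  [HereditarilyLindelofSpace X]

lemma measure_diff_support_restrict (μ : Measure X) (s : Set X) :
    μ (s \ (μ.restrict s).support) = 0 := by
  rw [Set.sdiff_eq, Set.inter_comm, ← restrict_apply isOpen_compl_support.measurableSet]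
  exact measure_compl_support

end MeasureTheory.Measure

lemma Mset_eq_support_restrict (d : ℕ) (h : (Fin d → ℝ) → ℝ) (ρ : ℝ) :
    Mset d h ρ = (volume.restrict {y | ρ ≤ h y}).support := by
  ext x
  simp only [Mset, Measure.support_eq_forall_isOpen, Set.mem_ofPred_eq]
  exact forall_congr' fun U => forall_comm.trans <| forall₂_congr fun hxU hopen => by
    rw [Measure.restrict_apply hopen.measurableSet]

lemma IsDensityOf.ae_eq {d : ℕ} {P : Measure (Fin d → ℝ)} {h g : (Fin d → ℝ) → ℝ}
    (hh : IsDensityOf d P h) (hg : IsDensityOf d P g) : h =ᵐ[volume] g := by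
  have hofReal := (withDensity_eq_iff_of_sigmaFinite hh.1.ennreal_ofReal.aemeasurable
    hg.1.ennreal_ofReal.aemeasurable).mp (hh.2.2 ▸ hg.2.2)
  filter_upwards [hofReal] with x hx
  exact (ENNReal.ofReal_eq_ofReal_iff (hh.2.1 x) (hg.2.1 x)).mp hx

lemma superlevelSet_ae_eq {α : Type*} [MeasurableSpace α] {μ : Measure α} {h g : α → ℝ}
    (hhg : h =ᵐ[μ] g) (ρ : ℝ) : {x | ρ ≤ h x} =ᵐ[μ] {x | ρ ≤ g x} :=
  hhg.fun_comp (ρ ≤ ·)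

theorem level_set_Mset_null_differences_general {d : ℕ}
    (P : Measure (Fin d → ℝ))
    (h : (Fin d → ℝ) → ℝ) (hdens : IsDensityOf d P h)
    (ρ : ℝ) :
    volume ({x | ρ ≤ h x} \ Mset d h ρ) = 0 ∧
    (NormalAtLevel d P h ρ →
      volume (Mset d h ρ \ {x | ρ ≤ h x}) = 0 ∧
      volume (symmDiff (Mset d h ρ) {x | ρ ≤ h x}) = 0) := by
  have level_diff_M : volume ({x | ρ ≤ h x} \ Mset d h ρ) = 0 := by
    rw [Mset_eq_support_restrict]
    exact Measure.measure_diff_support_restrict _ _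
  refine ⟨level_diff_M, fun ⟨h₁, _, hdens₁, _, hM₁, _⟩ => ?_⟩
  have M_diff_level : volume (Mset d h ρ \ {x | ρ ≤ h x}) = 0 := by
    rw [measure_congr ((Filter.EventuallyEq.refl _ _).diff
      (superlevelSet_ae_eq (hdens.ae_eq hdens₁) ρ))]
    exact hM₁
  exact ⟨M_diff_level, measure_union_null M_diff_level level_diff_M⟩

/-- Let `P` be a Lebesgue-absolutely continuous probability measure on
`ℝ^d`, `ρ ≥ 0`, and `h` any Lebesgue density of `P`.  Then (i) `λ^d({h ≥ ρ} ∖ M_ρ) = 0`;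
and (ii) if `P` is normal at level `ρ`, then also `λ^d(M_ρ ∖ {h ≥ ρ}) = 0`, and
consequently `λ^d(M_ρ △ {h ≥ ρ}) = 0`. -/
theorem level_set_Mset_null_differences {d : ℕ}
    (P : Measure (Fin d → ℝ)) [IsProbabilityMeasure P]
    (h : (Fin d → ℝ) → ℝ) (hdens : IsDensityOf d P h)
    (ρ : ℝ) (hρ : 0 ≤ ρ) :
    volume ({x | ρ ≤ h x} \ Mset d h ρ) = 0 ∧
    (NormalAtLevel d P h ρ →
      volume (Mset d h ρ \ {x | ρ ≤ h x}) = 0 ∧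
      volume (symmDiff (Mset d h ρ) {x | ρ ≤ h x}) = 0) :=
  level_set_Mset_null_differences_general P h hdens ρ
end
end
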